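/- (S-expansion of a higher-order Lie algebra.) Let S be a finite commutative semigroup and let C : (Fin n → ι) → ι → k be totally antisymmetric structure constants satisfying the generalized Jacobi identity. Define S-expanded structure constants on the index set ι × S by C̃ ((A₁,α₁),…,(Aₙ,αₙ)) (t,γ) = C (A₁,…,Aₙ) t if α₁·α₂·⋯·αₙ = γ in S, and C̃ ((A₁,α₁),…,(Aₙ,αₙ)) (t,γ) = 0 otherwise. Then C̃ is totally antisymmetric under simultaneous permutation (with sign) of its n lower index pairs and satisfies the generalized Jacobi identity on ι × S; hence the S-expanded multialgebra 𝔊 = S × 𝒢 is a higher-order Lie algebra of order n. -/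

import Mathlib

/-!
The expanded constants factor as `C̃ ((A,α)) (t,γ) = K(α) γ · C A t` with the selector `K`.
Since `S` is commutative, `K(α ∘ σ) = K(α)`, so `C̃` inherits the antisymmetry of `C`. In the
Jacobi contraction the sum over the intermediate index `(r, s)` collapses to `s = α₁⋯αₙ` (a
genuine element of `S` because `n ≥ 1`), and by associativity every term then carries the same
selector `K(α₁⋯α_{2n-1}) γ`, independent of the permutation. It comes out of the
antisymmetrization, and what is left is the generalized Jacobi identity for `C`.
-/

open scoped Classical

noncomputable section

/-- Total antisymmetry of structure constants. -/
def IsTotallyAntisymmetric {k ι : Type*} [CommRing k] {n : ℕ}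
    (C : (Fin n → ι) → ι → k) : Prop :=
  ∀ (σ : Equiv.Perm (Fin n)) (i : Fin n → ι) (t : ι),
    C (i ∘ σ) t = (Equiv.Perm.sign σ : ℤ) • C i t

/-- The generalized Jacobi identity. -/
def SatisfiesGJI {k ι : Type*} [CommRing k] [Fintype ι] {n : ℕ}
    (C : (Fin n → ι) → ι → k) : Prop :=
  ∀ (j : Fin (2 * n - 1) → ι) (t : ι),
    (∑ σ : Equiv.Perm (Fin (2 * n - 1)),
      (Equiv.Perm.sign σ : ℤ) •
        ∑ ρ : ι,
          C (fun l : Fin n => j (σ ⟨(l : ℕ), lt_of_lt_of_le l.isLt (by omega)⟩)) ρ *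
          C (fun l : Fin n =>
              if hl : (l : ℕ) = 0 then ρ
              else j (σ ⟨n + (l : ℕ) - 1, by have := l.isLt; omega⟩)) t) = 0

/-- The product `α₁·α₂·⋯·αₙ` of a family of semigroup elements, computed in the
monoid `WithOne S` (for `n ≥ 1` it is the genuine semigroup product, coerced). -/
def wprod {S : Type*} [CommSemigroup S] {n : ℕ} (f : Fin n → S) : WithOne S :=
  ∏ l, (f l : WithOne S)

/-- The `S`-expanded structure constants on `ι × S`:
`C̃ ((A₁,α₁),…,(Aₙ,αₙ)) (t,γ) = C (A₁,…,Aₙ) t` if `α₁·⋯·αₙ = γ` in `S`, else `0`. -/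
def SExpandedC {k ι S : Type*} [CommRing k] [CommSemigroup S] {n : ℕ}
    (C : (Fin n → ι) → ι → k) : (Fin n → ι × S) → (ι × S) → k :=
  fun A t =>
    if wprod (fun l => (A l).2) = ((t.2 : S) : WithOne S)
    then C (fun l => (A l).1) t.1 else 0

theorem prod_fin_two_mul_add_one_sub_one {M : Type*} [CommMonoid M] (m : ℕ)
    (f : Fin (2 * (m + 1) - 1) → M) :
    ∏ x, f x = (∏ l : Fin (m + 1), f ⟨l, by omega⟩) * ∏ i : Fin m, f ⟨m + 1 + i, by omega⟩ := by
  rw [← Fin.prod_congr' f (by omega : m + 1 + m = 2 * (m + 1) - 1), Fin.prod_univ_add]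
  rfl

section SExpansion

variable {k ι S : Type*} [CommRing k] [CommSemigroup S]

theorem wprod_comp_perm {n : ℕ} (f : Fin n → S) (σ : Equiv.Perm (Fin n)) :
    wprod (f ∘ σ) = wprod f :=
  Equiv.prod_comp σ fun l => (f l : WithOne S)

theorem wprod_cons {n : ℕ} (s : S) (f : Fin n → S) :
    wprod (Fin.cons s f : Fin (n + 1) → S) = s * wprod f := by
  simp only [wprod, Fin.prod_univ_succ, Fin.cons_zero, Fin.cons_succ]

theorem exists_wprod_eq_coe : ∀ {m : ℕ} (f : Fin (m + 1) → S), ∃ p : S, wprod f = p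
  | 0, f => ⟨f 0, by simp [wprod]⟩
  | m + 1, f => by
    obtain ⟨p, hp⟩ := exists_wprod_eq_coe (Fin.tail f)
    refine ⟨f 0 * p, ?_⟩
    rw [← Fin.cons_self_tail f, wprod_cons, hp, Fin.cons_zero, WithOne.coe_mul]

theorem isTotallyAntisymmetric_sExpandedC {n : ℕ} {C : (Fin n → ι) → ι → k}
    (hA : IsTotallyAntisymmetric C) : IsTotallyAntisymmetric (SExpandedC (S := S) C) := by
  intro σ A t
  have hw : wprod (fun l => ((A ∘ σ) l).2) = wprod (fun l => (A l).2) :=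
    wprod_comp_perm (fun l => (A l).2) σ
  simp only [SExpandedC, hw]
  split_ifs
  exacts [hA σ (fun l => (A l).1) t.1, (smul_zero _).symm]

theorem sExpandedC_cons {n : ℕ} (C : (Fin (n + 1) → ι) → ι → k) (ρ : ι × S)
    (c : Fin n → ι × S) (t : ι × S) :
    SExpandedC C (Fin.cons ρ c) t =
      if ρ.2 * wprod (Prod.snd ∘ c) = (t.2 : WithOne S)
      then C (Fin.cons ρ.1 (Prod.fst ∘ c)) t.1 else 0 := by
  have h2 : (fun l => (Fin.cons ρ c : Fin (n + 1) → ι × S) l |>.2) = Fin.cons ρ.2 (Prod.snd ∘ c) :=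
    Fin.comp_cons Prod.snd ρ c
  have h1 : (fun l => (Fin.cons ρ c : Fin (n + 1) → ι × S) l |>.1) = Fin.cons ρ.1 (Prod.fst ∘ c) :=
    Fin.comp_cons Prod.fst ρ c
  rw [SExpandedC, h1, h2, wprod_cons]

theorem sum_sExpandedC_mul_sExpandedC_cons [Fintype ι] [Fintype S] {m : ℕ}
    (C : (Fin (m + 1) → ι) → ι → k) (a : Fin (m + 1) → ι × S) (c : Fin m → ι × S)
    (t : ι × S) :
    ∑ ρ, SExpandedC C a ρ * SExpandedC C (Fin.cons ρ c) t =
      if wprod (Prod.snd ∘ a) * wprod (Prod.snd ∘ c) = (t.2 : WithOne S)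
      then ∑ r, C (Prod.fst ∘ a) r * C (Fin.cons r (Prod.fst ∘ c)) t.1 else 0 := by
  obtain ⟨p, hp⟩ := exists_wprod_eq_coe (Prod.snd ∘ a)
  have ha : ∀ ρ : ι × S, SExpandedC C a ρ = if p = ρ.2 then C (Prod.fst ∘ a) ρ.1 else 0 := by
    intro ρ
    rw [SExpandedC, show wprod (fun l => (a l).2) = p from hp, WithOne.coe_inj]
    rfl
  simp only [sExpandedC_cons, ha, ite_mul, zero_mul, Fintype.sum_prod_type]
  rw [Finset.sum_comm]
  simp only [mul_ite, mul_zero, Finset.sum_ite_irrel, Finset.sum_const_zero,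
    Finset.sum_ite_eq, Finset.mem_univ, if_true, hp]

def jacobiTerm [Fintype ι] {n : ℕ} (C : (Fin n → ι) → ι → k) (g : Fin (2 * n - 1) → ι)
    (t : ι) : k :=
  ∑ ρ : ι,
    C (fun l : Fin n => g ⟨(l : ℕ), lt_of_lt_of_le l.isLt (by omega)⟩) ρ *
    C (fun l : Fin n =>
        if hl : (l : ℕ) = 0 then ρ
        else g ⟨n + (l : ℕ) - 1, by have := l.isLt; omega⟩) t

theorem satisfiesGJI_iff_jacobiTerm [Fintype ι] {n : ℕ} (C : (Fin n → ι) → ι → k) :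
    SatisfiesGJI C ↔ ∀ (j : Fin (2 * n - 1) → ι) (t : ι),
      ∑ σ : Equiv.Perm (Fin (2 * n - 1)), (Equiv.Perm.sign σ : ℤ) • jacobiTerm C (j ∘ σ) t = 0 :=
  Iff.rfl

theorem jacobiTerm_eq_sum_cons [Fintype ι] {m : ℕ} (C : (Fin (m + 1) → ι) → ι → k)
    (g : Fin (2 * (m + 1) - 1) → ι) (t : ι) :
    jacobiTerm C g t = ∑ ρ : ι, C (fun l : Fin (m + 1) => g ⟨l, by omega⟩) ρ *
      C (Fin.cons ρ fun i : Fin m => g ⟨m + 1 + i, by omega⟩) t := by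
  refine Finset.sum_congr rfl fun ρ _ => congrArg₂ _ rfl (congrArg₂ _ (funext fun l => ?_) rfl)
  cases l using Fin.cases with
  | zero => rfl
  | succ i => simp

theorem jacobiTerm_sExpandedC [Fintype ι] [Fintype S] {m : ℕ}
    (C : (Fin (m + 1) → ι) → ι → k) (g : Fin (2 * (m + 1) - 1) → ι × S) (t : ι × S) :
    jacobiTerm (SExpandedC C) g t =
      if wprod (Prod.snd ∘ g) = (t.2 : WithOne S)
      then jacobiTerm C (Prod.fst ∘ g) t.1 else 0 := by
  have hsplit : wprod (Prod.snd ∘ g) =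
      wprod (fun l : Fin (m + 1) => (g ⟨l, by omega⟩).2) *
        wprod (fun i : Fin m => (g ⟨m + 1 + i, by omega⟩).2) :=
    prod_fin_two_mul_add_one_sub_one m _
  rw [jacobiTerm_eq_sum_cons, jacobiTerm_eq_sum_cons, sum_sExpandedC_mul_sExpandedC_cons, hsplit]
  rfl

end SExpansion

/-- (S-expansion of a higher-order Lie algebra.) If `S` is a finite abelian semigroup
and `C` are totally antisymmetric structure constants satisfying the generalized
Jacobi identity, then the `S`-expanded structure constants are totally antisymmetric
and satisfy the generalized Jacobi identity on `ι × S`; hence the `S`-expanded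
multialgebra `𝔊 = S × 𝒢` is a higher-order Lie algebra of order `n`. -/
theorem sExpandedC_isMultialgebra {k ι S : Type*} [CommRing k] [Fintype ι]
    [CommSemigroup S] [Fintype S] {n : ℕ} (hn : 2 ≤ n)
    (C : (Fin n → ι) → ι → k)
    (hA : IsTotallyAntisymmetric C) (hJ : SatisfiesGJI C) :
    IsTotallyAntisymmetric (SExpandedC (S := S) C) ∧
    SatisfiesGJI (SExpandedC (S := S) C) := by
  refine ⟨isTotallyAntisymmetric_sExpandedC hA, ?_⟩
  obtain ⟨m, rfl⟩ : ∃ m, n = m + 1 := ⟨n - 1, by omega⟩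
  refine (satisfiesGJI_iff_jacobiTerm _).2 fun j t => ?_
  have hw : ∀ σ : Equiv.Perm (Fin (2 * (m + 1) - 1)),
      wprod (Prod.snd ∘ j ∘ σ) = wprod (Prod.snd ∘ j) :=
    wprod_comp_perm (Prod.snd ∘ j)
  simp only [jacobiTerm_sExpandedC, hw]
  split_ifs
  · exact (satisfiesGJI_iff_jacobiTerm C).1 hJ (Prod.fst ∘ j) t.1
  · simp
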